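/- arXiv:math/0111283 — 6 statements merged into one kernel-verified Lean document; each statement's English description precedes it below -/
import Mathlib

section
/- Let G be a periodic group generated by two proper subgroups H and K, and let X be the graph with vertex set G/H ⊔ G/K and edges g(H∩K) joining gH to gK. Then the subgraph obtained from X by deleting the two vertices H (the trivial coset in G/H) and K (the trivial coset in G/K), together with all their incident edges, is connected. -/
/-!
Take `h ∈ H \ K`, `k ∈ K \ H` and `z = h k⁻¹`, so that `zK = hK` and `z⁻¹H = kH`. If `kH` were
not in the component `C` of `hK` in the punctured graph, neither would be its neighbour `z⁻¹K`.
Since `z • v` is a deleted vertex only for `v ∈ {z⁻¹H, z⁻¹K}`, translation by `z` then maps `C`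
to a connected set of surviving vertices containing `zhK`, which is joined to `hK = zK` through
`zH = zhH`; so `zC ⊆ C`. As `z` has finite order, also `z⁻¹C ⊆ C`, yet `zH ∈ C` while
`z⁻¹ • zH = H` is deleted. Hence all neighbours `hK`, `kH` of the deleted vertices lie in one
component, and since `X` is connected (`H ⊔ K = G`) every surviving vertex has a path to one of
them avoiding `H` and `K`.
-/

open SimpleGraph Sum

namespace SimpleGraph

variable {V : Type*} {X : SimpleGraph V} {s : Set V}

theorem Reachable.induce_map (f : X →g X) {u v : s}
    (hf : ∀ w : s, (X.induce s).Reachable u w → f w ∈ s) (huv : (X.induce s).Reachable u v) :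
    (X.induce s).Reachable ⟨f u, hf u .rfl⟩ ⟨f v, hf v huv⟩ := by
  classical
  obtain ⟨p⟩ := huv
  refine ⟨((p.map (Embedding.induce s).toHom).map f).induce s ?_⟩
  simp only [Walk.support_map, List.map_map, List.mem_map, Function.comp_apply,
    forall_exists_index, and_imp, forall_apply_eq_imp_iff₂]
  exact fun w hw => hf w (p.takeUntil w hw).reachable

theorem Connected.induce_of_boundary_reachable (hX : X.Connected) {u t : V} (hu : u ∈ s)
    (ht : t ∉ s)
    (hbdry : ∀ v (hv : v ∈ s) w, w ∉ s → X.Adj v w → (X.induce s).Reachable ⟨u, hu⟩ ⟨v, hv⟩) :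
    (X.induce s).Connected := by
  have reach (v : V) (hv : v ∈ s) (p : X.Walk v t) : (X.induce s).Reachable ⟨u, hu⟩ ⟨v, hv⟩ := by
    induction p with
    | nil => exact absurd hv ht
    | @cons v w _ hvw _ ih =>
      by_cases hw : w ∈ s
      · exact (ih ht hw).trans (induce_adj.2 hvw).reachable.symm
      · exact hbdry v hv w hw hvw
  refine (connected_iff_exists_forall_reachable _).2 ⟨⟨u, hu⟩, fun ⟨v, hv⟩ => ?_⟩
  exact reach v hv (hX.preconnected v t).some

end SimpleGraph

theorem IsOfFinOrder.mapsTo_inv_smul {G α : Type*} [Group G] [MulAction G α] {z : G}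
    (hz : IsOfFinOrder z) {C : Set α} (hC : Set.MapsTo (z • ·) C C) :
    Set.MapsTo (z⁻¹ • ·) C C := by
  obtain ⟨n, hn⟩ : z⁻¹ ∈ Submonoid.powers z :=
    hz.mem_powers_iff_mem_zpowers.2 (inv_mem (Subgroup.mem_zpowers z))
  rw [← hn, ← smul_iterate]
  exact hC.iterate n

section

variable {G : Type*} [Group G]

theorem Subgroup.exists_mem_notMem_of_sup_eq_top {H K : Subgroup G} (hgen : H ⊔ K = ⊤)
    (hK : K ≠ ⊤) : ∃ h ∈ H, h ∉ K :=
  SetLike.not_le_iff_exists.1 fun hle => hK (by rwa [sup_eq_right.2 hle] at hgen)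

variable (H K : Subgroup G)

def cosetGraph : SimpleGraph (G ⧸ H ⊕ G ⧸ K) :=
  SimpleGraph.fromRel fun a b => ∃ g : G, a = inl ↑g ∧ b = inr ↑g

def nonTrivialCosets : Set (G ⧸ H ⊕ G ⧸ K) :=
  {v | v ≠ inl ↑(1 : G) ∧ v ≠ inr ↑(1 : G)}

variable {H K}

namespace nonTrivialCosets

@[simp]
theorem inl_mem {g : G} : (inl ↑g : G ⧸ H ⊕ G ⧸ K) ∈ nonTrivialCosets H K ↔ g ∉ H := by
  simp [nonTrivialCosets, QuotientGroup.eq]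

@[simp]
theorem inr_mem {g : G} : (inr ↑g : G ⧸ H ⊕ G ⧸ K) ∈ nonTrivialCosets H K ↔ g ∉ K := by
  simp [nonTrivialCosets, QuotientGroup.eq]

theorem smul_mem_iff {z : G} {v : G ⧸ H ⊕ G ⧸ K} :
    z • v ∈ nonTrivialCosets H K ↔ v ≠ inl ↑z⁻¹ ∧ v ≠ inr ↑z⁻¹ := by
  simp [nonTrivialCosets, smul_eq_iff_eq_inv_smul, MulAction.Quotient.smul_mk]

end nonTrivialCosets

namespace cosetGraph

theorem adj_inl_inr (g : G) : (cosetGraph H K).Adj (inl ↑g) (inr ↑g) :=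
  ⟨inl_ne_inr, .inl ⟨g, rfl, rfl⟩⟩

theorem exists_eq_inr_of_adj_inl_one {v : G ⧸ H ⊕ G ⧸ K}
    (h : (cosetGraph H K).Adj v (inl ↑(1 : G))) : ∃ g ∈ H, v = inr ↑g := by
  obtain ⟨-, ⟨g, rfl, hg⟩ | ⟨g, hg, rfl⟩⟩ := h
  · simp at hg
  · exact ⟨g, by simpa [QuotientGroup.eq] using (inl_injective hg).symm, rfl⟩

theorem exists_eq_inl_of_adj_inr_one {v : G ⧸ H ⊕ G ⧸ K}
    (h : (cosetGraph H K).Adj v (inr ↑(1 : G))) : ∃ g ∈ K, v = inl ↑g := by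
  obtain ⟨-, ⟨g, rfl, hg⟩ | ⟨g, hg, rfl⟩⟩ := h
  · exact ⟨g, by simpa [QuotientGroup.eq] using (inr_injective hg).symm, rfl⟩
  · simp at hg

def smulHom (z : G) : cosetGraph H K →g cosetGraph H K where
  toFun := (z • ·)
  map_rel' := by
    rintro u v ⟨-, ⟨g, rfl, rfl⟩ | ⟨g, rfl, rfl⟩⟩
    · exact adj_inl_inr (z * g)
    · exact (adj_inl_inr (z * g)).symm

theorem reachable_inl_mul {g x : G} (hx : x ∈ (H : Set G) ∪ K) :
    (cosetGraph H K).Reachable (inl ↑g) (inl ↑(g * x)) := by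
  rcases hx with hx | hx
  · rw [QuotientGroup.mk_mul_of_mem g hx]
  · have hgx : (↑(g * x) : G ⧸ K) = ↑g := QuotientGroup.mk_mul_of_mem g hx
    exact (adj_inl_inr g).reachable.trans (hgx ▸ (adj_inl_inr (g * x)).reachable.symm)

theorem connected (hgen : H ⊔ K = ⊤) : (cosetGraph H K).Connected := by
  have reach (g : G) : (cosetGraph H K).Reachable (inl ↑(1 : G)) (inl ↑g) := by
    have hg : g ∈ Subgroup.closure ((H : Set G) ∪ K) := by
      simp [← Subgroup.sup_eq_closure, hgen]
    induction hg using Subgroup.closure_induction_right with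
    | one => rfl
    | mul_right x _ y hy ih => exact ih.trans (reachable_inl_mul hy)
    | mul_inv_cancel x _ y hy ih =>
      exact ih.trans (reachable_inl_mul (hy.imp (inv_mem (x := y)) (inv_mem (x := y))))
  refine (connected_iff_exists_forall_reachable _).2 ⟨inl ↑(1 : G), ?_⟩
  rintro (a | b)
  · obtain ⟨g, rfl⟩ := QuotientGroup.mk_surjective a
    exact reach g
  · obtain ⟨g, rfl⟩ := QuotientGroup.mk_surjective b
    exact (reach g).trans (adj_inl_inr g).reachable

theorem reachable_inr_inl_of_isOfFinOrder {h k : G} (hh : h ∈ H) (hhK : h ∉ K)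
    (hk : k ∈ K) (hkH : k ∉ H) (hz : IsOfFinOrder (h * k⁻¹)) :
    ((cosetGraph H K).induce (nonTrivialCosets H K)).Reachable
      ⟨inr ↑h, nonTrivialCosets.inr_mem.2 hhK⟩ ⟨inl ↑k, nonTrivialCosets.inl_mem.2 hkH⟩ := by
  set z := h * k⁻¹
  have hzH : z ∉ H := fun hz => hkH (by simpa [z] using H.mul_mem (H.inv_mem hz) hh)
  have hz_invH : z⁻¹ ∉ H := fun hz => hkH (by simpa [z] using H.mul_mem hz hh)
  have hz_mkK : (↑z : G ⧸ K) = ↑h := QuotientGroup.mk_mul_of_mem h (inv_mem hk)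
  have hz_inv_mkH : (↑z⁻¹ : G ⧸ H) = ↑k := by
    simpa [z] using QuotientGroup.mk_mul_of_mem k (inv_mem hh)
  by_contra hb
  let C : Set (G ⧸ H ⊕ G ⧸ K) :=
    {v | ∃ hv, ((cosetGraph H K).induce (nonTrivialCosets H K)).Reachable
      ⟨inr ↑h, nonTrivialCosets.inr_mem.2 hhK⟩ ⟨v, hv⟩}
  have mem_of_reachable {v w} (hv : v ∈ C) (hw : w ∈ nonTrivialCosets H K)
      (hvw : ((cosetGraph H K).induce (nonTrivialCosets H K)).Reachable ⟨v, hv.1⟩ ⟨w, hw⟩) :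
      w ∈ C :=
    ⟨hw, hv.2.trans hvw⟩
  have mem_of_adj {v w} (hv : v ∈ C) (hw : w ∈ nonTrivialCosets H K)
      (hvw : (cosetGraph H K).Adj v w) : w ∈ C :=
    mem_of_reachable hv hw (induce_adj.2 hvw).reachable
  have hz_inv_notMem : inl ↑z⁻¹ ∉ C := hz_inv_mkH ▸ fun ⟨_, h⟩ => hb h
  have hz_mem : inl ↑z ∈ C :=
    mem_of_adj ⟨_, .rfl⟩ (nonTrivialCosets.inl_mem.2 hzH)
      (by rw [← hz_mkK]; exact (adj_inl_inr z).symm)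
  have smul_mem {w} (hw : w ∈ C) : z • w ∈ nonTrivialCosets H K := by
    refine nonTrivialCosets.smul_mem_iff.2 ⟨?_, ?_⟩
    · rintro rfl
      exact hz_inv_notMem hw
    · rintro rfl
      exact hz_inv_notMem (mem_of_adj hw (nonTrivialCosets.inl_mem.2 hz_invH)
        (adj_inl_inr _).symm)
  have mapsTo : Set.MapsTo (z • ·) C C := by
    rintro v ⟨_, hreach⟩
    have hz_smul : z • inr (↑h : G ⧸ K) ∈ C := by
      have hmem := smul_mem (w := inr ↑h) ⟨_, .rfl⟩
      rw [smul_inr, MulAction.Quotient.smul_mk] at hmem ⊢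
      refine mem_of_adj hz_mem hmem ?_
      rw [← QuotientGroup.mk_mul_of_mem z hh]
      exact adj_inl_inr _
    exact mem_of_reachable hz_smul _
      (hreach.induce_map (smulHom z) fun w hw => smul_mem ⟨w.2, hw⟩)
  simpa [MulAction.Quotient.smul_mk] using (hz.mapsTo_inv_smul mapsTo hz_mem).1

end cosetGraph

end

/-- Let `G` be a periodic group generated by two proper subgroups `H` and `K`, and
let `X` be the graph with vertices `G/H ⊕ G/K` and an edge joining `gH` to `gK`
for each `g ∈ G`.  Deleting the two vertices `H` (the trivial coset in `G/H`) and
`K` (the trivial coset in `G/K`), together with all incident edges, leaves a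
connected graph. -/
theorem stmt2 (G : Type*) [Group G] (hper : ∀ g : G, IsOfFinOrder g)
    (H K : Subgroup G) (hH : H ≠ ⊤) (hK : K ≠ ⊤) (hgen : H ⊔ K = ⊤) :
    ((SimpleGraph.fromRel (fun a b : (G ⧸ H) ⊕ (G ⧸ K) =>
      ∃ g : G, a = Sum.inl (QuotientGroup.mk g) ∧
        b = Sum.inr (QuotientGroup.mk g))).induce
      {v | v ≠ Sum.inl (QuotientGroup.mk (1 : G)) ∧
           v ≠ Sum.inr (QuotientGroup.mk (1 : G))}).Connected := by
  obtain ⟨h₀, hh₀, hh₀K⟩ := Subgroup.exists_mem_notMem_of_sup_eq_top hgen hK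
  obtain ⟨k₀, hk₀, hk₀H⟩ := Subgroup.exists_mem_notMem_of_sup_eq_top (sup_comm H K ▸ hgen) hH
  have reach {h k : G} (hh : h ∈ H) (hhK : h ∉ K) (hk : k ∈ K) (hkH : k ∉ H) :=
    cosetGraph.reachable_inr_inl_of_isOfFinOrder hh hhK hk hkH (hper _)
  show ((cosetGraph H K).induce (nonTrivialCosets H K)).Connected
  refine (cosetGraph.connected hgen).induce_of_boundary_reachable
    (nonTrivialCosets.inr_mem.2 hh₀K) (t := inl ↑(1 : G)) (fun ht => ht.1 rfl) ?_
  rintro v hv t ht hvt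
  rcases not_and_or.1 ht with ht | ht <;> rw [not_not] at ht <;> subst ht
  · obtain ⟨h, hh, rfl⟩ := cosetGraph.exists_eq_inr_of_adj_inl_one hvt
    exact (reach hh₀ hh₀K hk₀ hk₀H).trans (reach hh (nonTrivialCosets.inr_mem.1 hv) hk₀ hk₀H).symm
  · obtain ⟨k, hk, rfl⟩ := cosetGraph.exists_eq_inl_of_adj_inr_one hvt
    exact reach hh₀ hh₀K hk (nonTrivialCosets.inl_mem.1 hv)
end

section
/- Let h ∈ H \ K and k ∈ K \ H in a periodic group G, and let L = ⟨kh⁻¹⟩, a finite cyclic group. Let m and n denote the orders of the L-orbits of the cosets H ∈ G/H and K ∈ G/K, respectively, under left multiplication. If m ≥ n, then writing g = kh⁻¹, the 2n cosets H, K, gH, gK, g²H, g²K, …, gⁿ⁻¹H, gⁿ⁻¹K are pairwise distinct. -/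
open MulAction Function Set

theorem MulAction.pow_smul_injOn_Iio_minimalPeriod {M β : Type*} [Monoid M] [MulAction M β]
    (g : M) (b : β) :
    (Iio (minimalPeriod (g • ·) b)).InjOn (fun i : ℕ => g ^ i • b) := by
  simpa only [smul_iterate] using iterate_injOn_Iio_minimalPeriod (f := (g • ·)) (x := b)

theorem MulAction.natCard_orbit_zpowers {G β : Type*} [Group G] [MulAction G β] (g : G) (b : β) :
    Nat.card (orbit (Subgroup.zpowers g) b) = minimalPeriod (g • ·) b := by
  rw [Nat.card_congr (orbitZPowersEquiv g b), Nat.card_zmod]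

theorem QuotientGroup.pow_mk_injective_of_le_card_orbit {G : Type*} [Group G] {H : Subgroup G}
    {g : G} {n : ℕ}
    (hn : n ≤ Nat.card (orbit (Subgroup.zpowers g) (QuotientGroup.mk (1 : G) : G ⧸ H))) :
    Injective (fun i : Fin n => (QuotientGroup.mk (g ^ (i : ℕ)) : G ⧸ H)) := by
  replace hn := hn.trans_eq (natCard_orbit_zpowers g _)
  intro i j hij
  have hmk : ∀ l : ℕ, (QuotientGroup.mk (g ^ l) : G ⧸ H) = g ^ l • QuotientGroup.mk 1 := by
    intro l
    rw [MulAction.Quotient.smul_mk, smul_eq_mul, mul_one]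
  simp only [hmk] at hij
  exact Fin.ext <| pow_smul_injOn_Iio_minimalPeriod g _
    (mem_Iio.2 (i.isLt.trans_le hn)) (mem_Iio.2 (j.isLt.trans_le hn)) hij

theorem stmt3_general (G : Type*) [Group G]
    (H K : Subgroup G)
    (g : G) (m n : ℕ)
    (hm : m = Nat.card (MulAction.orbit (Subgroup.zpowers g)
      (QuotientGroup.mk (1 : G) : G ⧸ H)))
    (hn : n = Nat.card (MulAction.orbit (Subgroup.zpowers g)
      (QuotientGroup.mk (1 : G) : G ⧸ K)))
    (hmn : n ≤ m) :
    Function.Injective (fun p : Fin n ⊕ Fin n =>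
      Sum.map (fun i : Fin n => (QuotientGroup.mk (g ^ (i : ℕ)) : G ⧸ H))
        (fun i : Fin n => (QuotientGroup.mk (g ^ (i : ℕ)) : G ⧸ K)) p) := by
  subst hm
  exact Sum.map_injective.2
    ⟨QuotientGroup.pow_mk_injective_of_le_card_orbit hmn,
      QuotientGroup.pow_mk_injective_of_le_card_orbit hn.le⟩

/-- Let `h ∈ H \ K` and `k ∈ K \ H` in a periodic group `G`, let `g = k * h⁻¹`
and `L = ⟨g⟩` (a finite cyclic group).  Let `m` and `n` be the sizes of the
`L`-orbits of the trivial cosets `H ∈ G/H` and `K ∈ G/K`.  If `m ≥ n`, then the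
`2n` cosets `H, K, gH, gK, …, gⁿ⁻¹H, gⁿ⁻¹K` are pairwise distinct. -/
theorem stmt3 (G : Type*) [Group G] (hper : ∀ x : G, IsOfFinOrder x)
    (H K : Subgroup G) (h k : G) (hh : h ∈ H ∧ h ∉ K) (hk : k ∈ K ∧ k ∉ H)
    (g : G) (hg : g = k * h⁻¹) (m n : ℕ)
    (hm : m = Nat.card (MulAction.orbit (Subgroup.zpowers g)
      (QuotientGroup.mk (1 : G) : G ⧸ H)))
    (hn : n = Nat.card (MulAction.orbit (Subgroup.zpowers g)
      (QuotientGroup.mk (1 : G) : G ⧸ K)))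
    (hmn : n ≤ m) :
    Function.Injective (fun p : Fin n ⊕ Fin n =>
      Sum.map (fun i : Fin n => (QuotientGroup.mk (g ^ (i : ℕ)) : G ⧸ H))
        (fun i : Fin n => (QuotientGroup.mk (g ^ (i : ℕ)) : G ⧸ K)) p) :=
  stmt3_general G H K g m n hm hn hmn
end

section
/- Let n ∈ ℕ, let R be a ring, let 0 → Mₙ → Mₙ₋₁ → ⋯ → M₁ → M₀ → M₋₁ → 0 be an exact sequence of R-modules, and let L be an R-module. If Extᴿⁱ(L, Mᵢ) = 0 for all i = 0, …, n, then Hom_R(L, M₋₁) = 0. -/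
/-!
Dimension shifting along a projective resolution `P → L`. Lift `φ ∘ ε : P₀ → M₋₁` through
`M₀ → M₋₁`; the obstruction to choosing the lift as a 0-cocycle of `Hom(P, M₀)` is a 1-cocycle
with values in the next kernel, and so on up the sequence. At stage `i` the obstruction is
killed by `Extⁱ(L, Mᵢ) = 0` (cocycles are coboundaries), and it vanishes outright at the top,
where the sequence starts with an injection. The resulting 0-cocycle into `M₀` is zero because
`Hom(L, M₀) = Ext⁰(L, M₀) = 0`, hence `φ ∘ ε = 0` and `φ = 0`.
-/

open CategoryTheory

universe u v

namespace LinearMap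

variable {R : Type*} [Ring R] {Q A B C : Type*} [AddCommGroup Q] [Module R Q]
  [AddCommGroup A] [Module R A] [AddCommGroup B] [Module R B] [AddCommGroup C] [Module R C]

theorem exists_comp_eq_of_range_eq_ker [Module.Projective R Q] {g : A →ₗ[R] B} {h : B →ₗ[R] C}
    (hgh : range g = ker h) (u : Q →ₗ[R] B) (hu : h ∘ₗ u = 0) : ∃ v : Q →ₗ[R] A, g ∘ₗ v = u := by
  have hg_mem : ∀ x, g x ∈ ker h := fun x => hgh ▸ mem_range_self g x
  have hu_mem : ∀ x, u x ∈ ker h := fun x => by simpa using congr($hu x)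
  have hsurj : Function.Surjective (g.codRestrict (ker h) hg_mem) := by
    rintro ⟨y, hy⟩
    obtain ⟨x, rfl⟩ := (hgh ▸ hy : y ∈ range g)
    exact ⟨x, rfl⟩
  obtain ⟨v, hv⟩ := Module.projective_lifting_property _ (u.codRestrict (ker h) hu_mem) hsurj
  exact ⟨v, ext fun x => congr_arg Subtype.val congr($hv x)⟩

theorem comp_eq_zero_of_range_eq_ker {g : A →ₗ[R] B} {h : B →ₗ[R] C} (hgh : range g = ker h) :
    h ∘ₗ g = 0 :=
  range_le_ker_iff.mp hgh.le

end LinearMap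

section CocycleLifting

variable {R : Type*} [Ring R]
  {P : ℕ → Type*} [∀ i, AddCommGroup (P i)] [∀ i, Module R (P i)] (d : ∀ i, P (i + 1) →ₗ[R] P i)
  {M : ℕ → Type*} [∀ i, AddCommGroup (M i)] [∀ i, Module R (M i)] (f : ∀ i, M (i + 1) →ₗ[R] M i)

/-- Every `k`-cocycle of `Hom(P, M k)` that factors through `f k` is the image of a
`k`-cocycle of `Hom(P, M (k + 1))`. -/
def CocycleLiftingAt (k : ℕ) : Prop :=
  ∀ g : P k →ₗ[R] M (k + 1), f k ∘ₗ g ∘ₗ d k = 0 →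
    ∃ g' : P k →ₗ[R] M (k + 1), f k ∘ₗ g' = f k ∘ₗ g ∧ g' ∘ₗ d k = 0

variable {d f}

theorem cocycleLiftingAt_of_injective {k : ℕ} (hf : Function.Injective (f k)) :
    CocycleLiftingAt d f k := fun g hg =>
  ⟨g, rfl, LinearMap.ext fun x => hf (by simpa using congr($hg x))⟩

theorem CocycleLiftingAt.of_succ {k : ℕ} (hd : d k ∘ₗ d (k + 1) = 0)
    [Module.Projective R (P (k + 1))] (hexact : LinearMap.range (f (k + 1)) = LinearMap.ker (f k))
    (hcob : ∀ ψ : P (k + 1) →ₗ[R] M (k + 2), ψ ∘ₗ d (k + 1) = 0 →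
      ∃ e : P k →ₗ[R] M (k + 2), e ∘ₗ d k = ψ)
    (hsucc : CocycleLiftingAt d f (k + 1)) : CocycleLiftingAt d f k := by
  intro g hg
  obtain ⟨h, hh⟩ := LinearMap.exists_comp_eq_of_range_eq_ker hexact (g ∘ₗ d k) hg
  have hh_cocycle : f (k + 1) ∘ₗ h ∘ₗ d (k + 1) = 0 := by
    rw [← LinearMap.comp_assoc, hh, LinearMap.comp_assoc, hd, LinearMap.comp_zero]
  obtain ⟨h', hfh', hh'⟩ := hsucc h hh_cocycle
  obtain ⟨e, he⟩ := hcob h' hh'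
  refine ⟨g - f (k + 1) ∘ₗ e, ?_, ?_⟩
  · rw [LinearMap.comp_sub, ← LinearMap.comp_assoc, LinearMap.comp_eq_zero_of_range_eq_ker hexact,
      LinearMap.zero_comp, sub_zero]
  · rw [LinearMap.sub_comp, ← hh, LinearMap.comp_assoc, he, hfh', sub_self]

theorem cocycleLiftingAt_of_le [∀ i, Module.Projective R (P i)] (hd : ∀ i, d i ∘ₗ d (i + 1) = 0)
    (hexact : ∀ i, LinearMap.range (f (i + 1)) = LinearMap.ker (f i)) {n : ℕ}
    (hinj : Function.Injective (f n))
    (hcob : ∀ k < n, ∀ ψ : P (k + 1) →ₗ[R] M (k + 2), ψ ∘ₗ d (k + 1) = 0 →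
      ∃ e : P k →ₗ[R] M (k + 2), e ∘ₗ d k = ψ) {k : ℕ} (hk : k ≤ n) :
    CocycleLiftingAt d f k :=
  Nat.decreasingInduction (motive := fun k _ => CocycleLiftingAt d f k)
    (fun j hj hsucc => hsucc.of_succ (hd j) (hexact j) (hcob j hj))
    (cocycleLiftingAt_of_injective hinj) hk

theorem subsingleton_linearMap_of_cocycleLiftingAt_zero {L : Type*} [AddCommGroup L] [Module R L]
    [Module.Projective R (P 0)] {ε : P 0 →ₗ[R] L} (hε : Function.Surjective ε)
    (hεd : ε ∘ₗ d 0 = 0) (hf : Function.Surjective (f 0))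
    (hH0 : ∀ ψ : P 0 →ₗ[R] M 1, ψ ∘ₗ d 0 = 0 → ψ = 0) (hlift : CocycleLiftingAt d f 0) :
    Subsingleton (L →ₗ[R] M 0) := by
  refine subsingleton_of_forall_eq 0 fun φ => ?_
  obtain ⟨g, hg⟩ := Module.projective_lifting_property (f 0) (φ ∘ₗ ε) hf
  have hg_cocycle : f 0 ∘ₗ g ∘ₗ d 0 = 0 := by
    rw [← LinearMap.comp_assoc, hg, LinearMap.comp_assoc, hεd, LinearMap.comp_zero]
  obtain ⟨g', hfg', hg'⟩ := hlift g hg_cocycle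
  have hφε : φ ∘ₗ ε = 0 ∘ₗ ε := by
    rw [← hg, ← hfg', hH0 g' hg', LinearMap.comp_zero, LinearMap.zero_comp]
  exact (LinearMap.cancel_right hε).mp hφε

end CocycleLifting

namespace CategoryTheory.ProjectiveResolution

variable {R : Type u} [Ring R] {X : ModuleCat.{v} R} [EnoughProjectives (ModuleCat.{v} R)]
  (P : ProjectiveResolution X) {N : ModuleCat.{v} R}

theorem exactAt_linearYonedaObj {i : ℕ}
    (h : Subsingleton (((Ext ℤ (ModuleCat R) i).obj (Opposite.op X)).obj N)) :
    (P.complex.linearYonedaObj ℤ N).ExactAt i := by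
  rw [HomologicalComplex.exactAt_iff_isZero_homology]
  exact (ModuleCat.isZero_of_subsingleton _).of_iso (P.isoExt i N).symm

theorem eq_zero_of_comp_d_eq_zero
    (h : Subsingleton (((Ext ℤ (ModuleCat R) 0).obj (Opposite.op X)).obj N))
    (ψ : P.complex.X 0 →ₗ[R] N) (hψ : ψ ∘ₗ (P.complex.d 1 0).hom = 0) : ψ = 0 := by
  have hexact := P.exactAt_linearYonedaObj h
  rw [HomologicalComplex.exactAt_iff' _ 0 0 1 (by simp) (by simp),
    ShortComplex.moduleCat_exact_iff] at hexact
  obtain ⟨e, he⟩ := hexact (ModuleCat.ofHom ψ) (ModuleCat.hom_ext hψ)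
  have he' : (P.complex.linearYonedaObj ℤ N).d 0 0 e = ModuleCat.ofHom ψ := he
  rw [HomologicalComplex.shape _ 0 0 (by decide)] at he'
  exact congr_arg ModuleCat.Hom.hom he'.symm

theorem exists_comp_d_eq {k : ℕ}
    (h : Subsingleton (((Ext ℤ (ModuleCat R) (k + 1)).obj (Opposite.op X)).obj N))
    (ψ : P.complex.X (k + 1) →ₗ[R] N) (hψ : ψ ∘ₗ (P.complex.d (k + 2) (k + 1)).hom = 0) :
    ∃ e : P.complex.X k →ₗ[R] N, e ∘ₗ (P.complex.d (k + 1) k).hom = ψ := by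
  have hexact := P.exactAt_linearYonedaObj h
  rw [HomologicalComplex.exactAt_iff' _ k (k + 1) (k + 2) (by simp) (by simp),
    ShortComplex.moduleCat_exact_iff] at hexact
  obtain ⟨e, he⟩ := hexact (ModuleCat.ofHom ψ) (ModuleCat.hom_ext hψ)
  exact ⟨e.hom, congr_arg ModuleCat.Hom.hom he⟩

end CategoryTheory.ProjectiveResolution

/-- Let `n ∈ ℕ`, `R` a ring, and `0 → Mₙ → ⋯ → M₀ → M₋₁ → 0` an exact sequence of
`R`-modules; here `M (i+1)` plays the role of `Mᵢ` and `M 0` that of `M₋₁`, the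
sequence being encoded by an `ℕ`-indexed complex which vanishes in degrees `> n+1`.
If `Extⁱ_R(L, Mᵢ) = 0` for `i = 0, …, n`, then `Hom_R(L, M₋₁) = 0`. -/
theorem stmt4 (n : ℕ) (R : Type) [Ring R]
    (M : ℕ → Type) [∀ i, AddCommGroup (M i)] [∀ i, Module R (M i)]
    (f : ∀ i, M (i + 1) →ₗ[R] M i)
    (hzero : ∀ i, n + 1 < i → Subsingleton (M i))
    (hsurj : Function.Surjective (f 0))
    (hexact : ∀ i, LinearMap.range (f (i + 1)) = LinearMap.ker (f i))
    (L : Type) [AddCommGroup L] [Module R L]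
    (hext : ∀ i ≤ n, Subsingleton
      (((Ext ℤ (ModuleCat R) i).obj
        (Opposite.op (ModuleCat.of R L))).obj (ModuleCat.of R (M (i + 1))))) :
    Subsingleton (L →ₗ[R] M 0) := by
  obtain ⟨P⟩ := HasProjectiveResolution.out (Z := ModuleCat.of R L)
  have hproj (i : ℕ) : Module.Projective R (P.complex.X i) :=
    (IsProjective.iff_projective _).mpr (P.projective i)
  have hinj : Function.Injective (f n) := by
    have := hzero (n + 2) (by omega)
    rw [← LinearMap.ker_eq_bot, ← hexact, LinearMap.range_eq_bot]
    exact Subsingleton.elim _ _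
  have hlift := cocycleLiftingAt_of_le (P := fun i => P.complex.X i)
    (d := fun i => (P.complex.d (i + 1) i).hom)
    (fun i => congr_arg ModuleCat.Hom.hom (P.complex.d_comp_d _ _ _)) hexact hinj
    (fun k hk => P.exists_comp_d_eq (hext (k + 1) hk)) (Nat.zero_le n)
  exact subsingleton_linearMap_of_cocycleLiftingAt_zero
    ((ModuleCat.epi_iff_surjective _).mp inferInstance)
    (congr_arg ModuleCat.Hom.hom P.complex_d_comp_π_f_zero) hsurj
    (P.eq_zero_of_comp_d_eq_zero (hext 0 (Nat.zero_le n))) hlift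
end

section
/- If G is an infinite group that is the union of a strictly increasing chain of proper subgroups (Gₙ)ₙ∈ℕ, and A is a nonzero abelian group, then H¹(G, AG) ≠ 0, where AG = A ⊗_ℤ ℤG is the induced module. More specifically, for a countably infinite locally finite group G, H¹(G, AG) contains a subgroup isomorphic to the countable direct power A^ℕ. -/
/-- The induced `ℤG`-module `AG = ℤG ⊗_ℤ A`, realized as finitely supported
functions `G →₀ A` with `G` acting by left translation of the support. -/
noncomputable def indRep (G : Type) [Group G] (A : Type) [AddCommGroup A] :
    Representation ℤ G (G →₀ A) where
  toFun g := Finsupp.lmapDomain A ℤ (fun x => g * x)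
  map_one' := by
    apply LinearMap.ext; intro f
    simp [Finsupp.lmapDomain]
    exact Finsupp.mapDomain_id
  map_mul' := by
    intro g h
    apply LinearMap.ext; intro f
    simp only [Finsupp.lmapDomain_apply, Module.End.mul_apply]
    rw [← Finsupp.mapDomain_comp]
    simp [Function.comp_def, mul_assoc]

/-!
If every translate `g • x - x` of a function `x : G → A` is finitely supported, then
`g ↦ g • x - x` is a 1-cocycle with values in `AG`, and it is a coboundary only if `x` is a
constant plus a finitely supported function. Write `G` as a strictly increasing union of finite
subgroups `Gₙ` and let `level g` be the least `n` with `g ∈ Gₙ`. Multiplying by `u ∈ Gₖ` does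
not change the level of an element outside `Gₖ`, so every `b ∘ level` has the property above;
since every level is attained and each `Gₙ` is finite, `b ∘ level` is a constant plus a finitely
supported function only if `b` is eventually constant. Finally `a : ℕ → A` is sent to a sequence
repeating each `aₙ` infinitely often, interleaved with zeros, which is eventually constant only
if `a = 0`.
-/

open Function Filter groupCohomology

section AlmostInvariant

variable {G : Type} [Group G] {A : Type} [AddCommGroup A]

lemma indRep_apply (g z : G) (v : G →₀ A) : indRep G A g v z = v (g⁻¹ * z) := by
  change Finsupp.mapDomain (g * ·) v z = _
  simpa using Finsupp.mapDomain_apply (mul_right_injective g) v (g⁻¹ * z)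

variable (G A) in
def almostInvariant : AddSubgroup (G → A) where
  carrier := {x | ∀ g : G, (support fun z => x (g⁻¹ * z) - x z).Finite}
  zero_mem' g := by simp
  add_mem' {x y} hx hy g := ((hx g).union (hy g)).subset fun z hz => by
    contrapose! hz
    simp only [Set.mem_union, mem_support, not_or, not_not] at hz
    simp only [mem_support, Pi.add_apply, not_not]
    rw [add_sub_add_comm, hz.1, hz.2, add_zero]
  neg_mem' {x} hx g := (hx g).subset fun z hz => by
    simp only [mem_support, Pi.neg_apply] at hz ⊢
    rwa [neg_sub_neg, ← neg_sub, neg_ne_zero] at hz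

namespace almostInvariant

noncomputable def translateSub (x : almostInvariant G A) (g : G) : G →₀ A :=
  Finsupp.ofSupportFinite _ (x.2 g)

lemma translateSub_apply (x : almostInvariant G A) (g z : G) :
    translateSub x g z = x.1 (g⁻¹ * z) - x.1 z := rfl

lemma translateSub_mem_cocycles₁ (x : almostInvariant G A) :
    translateSub x ∈ cocycles₁ (Rep.of (indRep G A)) := by
  refine (mem_cocycles₁_iff _).2 fun g h => Finsupp.ext fun z => ?_
  change translateSub x (g * h) z = indRep G A g (translateSub x h) z + translateSub x g z
  rw [indRep_apply, translateSub_apply, translateSub_apply, translateSub_apply, mul_inv_rev,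
    mul_assoc]
  abel

noncomputable def toCocycles₁ : almostInvariant G A →+ cocycles₁ (Rep.of (indRep G A)) where
  toFun x := ⟨translateSub x, translateSub_mem_cocycles₁ x⟩
  map_zero' := cocycles₁_ext fun g => Finsupp.ext fun z => by
    change translateSub 0 g z = 0
    simp only [translateSub_apply, ZeroMemClass.coe_zero, Pi.zero_apply, sub_self]
  map_add' x y := cocycles₁_ext fun g => Finsupp.ext fun z => by
    change translateSub (x + y) g z = translateSub x g z + translateSub y g z
    simp only [translateSub_apply, AddMemClass.coe_add, Pi.add_apply]
    abel

lemma exists_support_sub_const_finite_of_H1π_eq_zero {x : almostInvariant G A}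
    (hx : H1π _ (toCocycles₁ x) = 0) : ∃ c : A, (support fun z => x.1 z - c).Finite := by
  obtain ⟨y, hy⟩ := (H1π_eq_zero_iff _).1 hx
  have hxy (g z : G) : y (g⁻¹ * z) - y z = x.1 (g⁻¹ * z) - x.1 z := by
    rw [← translateSub_apply]
    change _ = (toCocycles₁ x : G → G →₀ A) g z
    rw [← hy]
    change _ = indRep G A g y z - y z
    rw [indRep_apply]
  refine ⟨x.1 1 - y 1, y.support.finite_toSet.subset fun z hz => ?_⟩
  have hz1 := hxy z z
  rw [inv_mul_cancel] at hz1
  contrapose! hz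
  rw [Finset.mem_coe, Finsupp.notMem_support_iff] at hz
  rw [hz, sub_zero] at hz1
  rw [notMem_support, hz1]
  abel

end almostInvariant

end AlmostInvariant

section Chain

variable {G : Type} [Group G] [Infinite G]

lemma Subgroup.exists_finite_gt_mem (hlf : ∀ S : Finset G, Finite (Subgroup.closure (S : Set G)))
    (H : Subgroup G) [Finite H] (g : G) : ∃ K : Subgroup G, Finite K ∧ H < K ∧ g ∈ K := by
  classical
  obtain ⟨t, ht⟩ := (H : Set G).toFinite.exists_notMem
  let S : Finset G := (H : Set G).toFinite.toFinset ∪ {g, t}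
  have hS : (S : Set G) = (H : Set G) ∪ {g, t} := by simp [S]
  refine ⟨Subgroup.closure S, hlf S, SetLike.lt_iff_le_and_exists.2 ⟨?_, t, ?_, ht⟩, ?_⟩
  · exact fun x hx => Subgroup.subset_closure (by rw [hS]; exact Or.inl hx)
  · exact Subgroup.subset_closure (by rw [hS]; simp)
  · exact Subgroup.subset_closure (by rw [hS]; simp)

lemma exists_strictMono_finite_subgroups [Countable G]
    (hlf : ∀ S : Finset G, Finite (Subgroup.closure (S : Set G))) :
    ∃ H : ℕ → Subgroup G, StrictMono H ∧ (∀ n, Finite (H n)) ∧ ∀ g, ∃ n, g ∈ H n := by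
  have step (H : {H : Subgroup G // Finite H}) (g : G) :
      ∃ K : {K : Subgroup G // Finite K}, H.1 < K.1 ∧ g ∈ K.1 := by
    have := H.2
    obtain ⟨K, hK, hHK, hg⟩ := H.1.exists_finite_gt_mem hlf g
    exact ⟨⟨K, hK⟩, hHK, hg⟩
  choose next hnext using step
  obtain ⟨e, he⟩ := exists_surjective_nat G
  let H : ℕ → {H : Subgroup G // Finite H} :=
    fun n => Nat.rec ⟨⊥, inferInstance⟩ (fun n K => next K (e n)) n
  refine ⟨fun n => (H n).1, strictMono_nat_of_lt_succ fun n => (hnext _ _).1,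
    fun n => (H n).2, fun g => ?_⟩
  obtain ⟨n, rfl⟩ := he g
  exact ⟨n + 1, (hnext _ _).2⟩

end Chain

section Level

variable {G : Type} [Group G] {H : ℕ → Subgroup G} (hH : ∀ g, ∃ n, g ∈ H n)

open Classical in
noncomputable def level (g : G) : ℕ := Nat.find (hH g)

lemma level_eq_iff (hmono : Monotone H) {g : G} {n : ℕ} :
    level hH g = n + 1 ↔ g ∈ H (n + 1) ∧ g ∉ H n := by
  classical
  rw [level, Nat.find_eq_iff]
  refine and_congr_right fun _ => ⟨fun h => h n n.lt_succ_self, fun h m hm hg => h ?_⟩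
  exact hmono (Nat.le_of_lt_succ hm) hg

lemma level_surjective (hmono : StrictMono H) : Surjective (level hH) := by
  classical
  rintro (_ | n)
  · exact ⟨1, (Nat.find_eq_zero _).2 (one_mem _)⟩
  · obtain ⟨g, hg, hgn⟩ := SetLike.exists_of_lt (hmono n.lt_succ_self)
    exact ⟨g, (level_eq_iff hH hmono.monotone).2 ⟨hg, hgn⟩⟩

lemma level_mul_of_mem_of_notMem (hmono : Monotone H) {k : ℕ} {u h : G} (hu : u ∈ H k)
    (hh : h ∉ H k) : level hH (u * h) = level hH h := by
  classical
  refine Nat.find_congr' fun {n} => ?_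
  rcases le_total k n with hkn | hnk
  · exact (H n).mul_mem_cancel_left (hmono hkn hu)
  · exact iff_of_false (fun huh => hh (((H k).mul_mem_cancel_left hu).1 (hmono hnk huh)))
      fun h' => hh (hmono hnk h')

variable {A : Type} [AddCommGroup A]

lemma comp_level_mem_almostInvariant (hmono : Monotone H) (hfin : ∀ n, Finite (H n))
    (b : ℕ → A) : b ∘ level hH ∈ almostInvariant G A := fun g => by
  obtain ⟨k, hk⟩ := hH g⁻¹
  refine (H k : Set G).toFinite.subset fun z hz => ?_
  by_contra hzk
  exact hz (by simp only [comp_apply, level_mul_of_mem_of_notMem hH hmono hk hzk, sub_self])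

noncomputable def compLevel (hmono : Monotone H) (hfin : ∀ n, Finite (H n)) :
    (ℕ → A) →+ almostInvariant G A where
  toFun b := ⟨b ∘ level hH, comp_level_mem_almostInvariant hH hmono hfin b⟩
  map_zero' := rfl
  map_add' _ _ := rfl

lemma eventually_eq_of_support_comp_level_sub_finite (hmono : StrictMono H) {b : ℕ → A} {c : A}
    (hb : (support fun z => b (level hH z) - c).Finite) : ∀ᶠ n in atTop, b n = c := by
  rw [← Nat.cofinite_eq_atTop, eventually_cofinite]
  refine (hb.image (level hH)).subset fun n hn => ?_
  obtain ⟨g, rfl⟩ := level_surjective hH hmono n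
  exact ⟨g, sub_ne_zero.2 hn, rfl⟩

end Level

section Spread

variable {A : Type} [AddCommGroup A]

def spreadWithZeros : (ℕ → A) →+ (ℕ → A) where
  toFun a m := if Even m then a (Nat.unpair (m / 2)).1 else 0
  map_zero' := by ext; simp
  map_add' a b := by ext m; split_ifs <;> simp [*]

lemma eq_zero_of_eventually_spreadWithZeros_eq {a : ℕ → A} {c : A}
    (h : ∀ᶠ m in atTop, spreadWithZeros a m = c) : a = 0 := by
  obtain ⟨N, hN⟩ := eventually_atTop.1 h
  have hc : c = 0 := by
    rw [← hN (2 * N + 1) (by omega)]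
    simp [spreadWithZeros]
  funext n
  have hn := hN (2 * Nat.pair n N) (by have := Nat.right_le_pair n N; omega)
  simpa [spreadWithZeros, hc] using hn

end Spread

/-- If `G` is a countably infinite locally finite group and `A` an abelian group
(with trivial `G`-action), then `H¹(G, AG) ≠ 0` whenever `A ≠ 0`; more
specifically, `H¹(G, AG)` contains a subgroup isomorphic to the countable direct
power `A^ℕ`. -/
theorem stmt10 (G : Type) [Group G] [Countable G] [Infinite G]
    (hlf : ∀ S : Finset G, Finite (Subgroup.closure (S : Set G)))
    (A : Type) [AddCommGroup A] :
    (Nontrivial A → Nontrivial (groupCohomology (Rep.of (indRep G A)) 1)) ∧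
    ∃ f : (ℕ → A) →+ groupCohomology (Rep.of (indRep G A)) 1,
      Function.Injective f := by
  obtain ⟨H, hmono, hfin, hH⟩ := exists_strictMono_finite_subgroups hlf
  let f : (ℕ → A) →+ H1 (Rep.of (indRep G A)) :=
    (H1π _).hom.toAddMonoidHom.comp <| almostInvariant.toCocycles₁.comp <|
      (compLevel hH hmono.monotone hfin).comp spreadWithZeros
  have hf : Injective f := (injective_iff_map_eq_zero f).2 fun a ha => by
    obtain ⟨c, hc⟩ := almostInvariant.exists_support_sub_const_finite_of_H1π_eq_zero ha
    exact eq_zero_of_eventually_spreadWithZeros_eq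
      (eventually_eq_of_support_comp_level_sub_finite hH hmono hc)
  exact ⟨fun _ => hf.nontrivial, f, hf⟩
end

section
/- If G is a countably infinite locally finite group and A is an abelian group, then Hⁿ(G, AG) = 0 for all n ≥ 2. -/
open Set

universe u

namespace Fin

variable {α : Type*} {m : ℕ} (op : α → α → α)

theorem contractNth_zero_cons (a : α) (g : Fin (m + 1) → α) :
    contractNth 0 op (cons a g) = cons (op a (g 0)) (tail g) := by
  funext i
  refine Fin.cases ?_ (fun i => ?_) i
  · rw [contractNth_apply_of_eq _ _ _ _ (by simp)]
    simp
  · rw [contractNth_apply_of_gt _ _ _ _ (by simp)]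
    simp [tail]

theorem contractNth_succ_cons (j : Fin (m + 1)) (a : α) (g : Fin (m + 1) → α) :
    contractNth j.succ op (cons a g) = cons a (contractNth j op g) := by
  funext i
  refine Fin.cases ?_ (fun i => ?_) i
  · rw [contractNth_apply_of_lt _ _ _ _ (by simp)]
    simp
  · rw [cons_succ]
    rcases lt_trichotomy (i : ℕ) j with h | h | h
    · rw [contractNth_apply_of_lt _ _ _ _ (by simpa using h),
        contractNth_apply_of_lt _ _ _ _ h, ← succ_castSucc, cons_succ]
    · rw [contractNth_apply_of_eq _ _ _ _ (by simpa using h),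
        contractNth_apply_of_eq _ _ _ _ h, ← succ_castSucc, cons_succ, cons_succ]
    · rw [contractNth_apply_of_gt _ _ _ _ (by simpa using h),
        contractNth_apply_of_gt _ _ _ _ h, cons_succ]

theorem contractNth_mem {S : Set α} (hS : ∀ a ∈ S, ∀ b ∈ S, op a b ∈ S) (j : Fin (m + 1))
    {g : Fin (m + 1) → α} (hg : g ∈ univ.pi fun _ => S) :
    contractNth j op g ∈ univ.pi fun _ => S := by
  rw [mem_univ_pi] at hg ⊢
  intro i
  rcases lt_trichotomy (i : ℕ) j with h | h | h
  · rw [contractNth_apply_of_lt _ _ _ _ h]; exact hg _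
  · rw [contractNth_apply_of_eq _ _ _ _ h]; exact hS _ (hg _) _ (hg _)
  · rw [contractNth_apply_of_gt _ _ _ _ h]; exact hg _

theorem cons_mem_univ_pi {S : Set α} {a : α} (ha : a ∈ S) {g : Fin m → α}
    (hg : g ∈ univ.pi fun _ => S) : (cons a g : Fin (m + 1) → α) ∈ univ.pi fun _ => S := by
  simp_all [forall_fin_succ]

end Fin

theorem exists_eqOn_of_eqOn_succ {X Y : Type*} {S : ℕ → Set X} (hS : Monotone S)
    (hcover : ∀ x, ∃ k, x ∈ S k) (u : ℕ → X → Y) (hu : ∀ k, EqOn (u (k + 1)) (u k) (S k)) :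
    ∃ v : X → Y, ∀ k, EqOn v (u k) (S k) := by
  choose c hc using hcover
  have stable : ∀ {k l}, k ≤ l → EqOn (u l) (u k) (S k) := by
    intro k l hkl
    induction l, hkl using Nat.le_induction with
    | base => exact eqOn_refl _ _
    | succ l hkl ih => exact fun x hx => (hu l (hS hkl hx)).trans (ih hx)
  refine ⟨fun x => u (c x) x, fun k x hx => ?_⟩
  exact (stable (le_max_right k (c x)) (hc x)).symm.trans (stable (le_max_left k (c x)) hx)

theorem Monotone.exists_mem_univ_pi {ι X : Type*} [Finite ι] {S : ℕ → Set X} (hS : Monotone S)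
    (hcover : ∀ x, ∃ k, x ∈ S k) (g : ι → X) : ∃ k, g ∈ univ.pi fun _ => S k := by
  choose c hc using fun i => hcover (g i)
  obtain ⟨k, hk⟩ := Finite.exists_le c
  exact ⟨k, mem_univ_pi.2 fun i => hS (hk i) (hc i)⟩

theorem exists_seq_of_forall_exists_succ {α : Type*} (P : ℕ → α → Prop) (R : ℕ → α → α → Prop)
    (h0 : ∃ a, P 0 a) (hsucc : ∀ k a, P k a → ∃ b, P (k + 1) b ∧ R k b a) :
    ∃ u : ℕ → α, ∀ k, P k (u k) ∧ R k (u (k + 1)) (u k) := by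
  choose next hnext using hsucc
  let seq : ∀ k, {a // P k a} :=
    fun k => Nat.rec ⟨h0.choose, h0.choose_spec⟩
      (fun k a => ⟨next k a.1 a.2, (hnext k a.1 a.2).1⟩) k
  exact ⟨fun k => (seq k).1, fun k => ⟨(seq k).2, (hnext k _ (seq k).2).2⟩⟩

theorem Subgroup.exists_monotone_finite_forall_exists_mem {G : Type*} [Group G] [Countable G]
    (hlf : ∀ S : Finset G, Finite (Subgroup.closure (S : Set G))) :
    ∃ Hs : ℕ → Subgroup G, Monotone Hs ∧ (∀ k, Finite (Hs k)) ∧ ∀ x, ∃ k, x ∈ Hs k := by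
  classical
  obtain ⟨e, he⟩ := exists_surjective_nat G
  refine ⟨fun k => closure ((Finset.range (k + 1)).image e : Set G), fun k l hkl => ?_,
    fun k => hlf _, fun x => ?_⟩
  · refine closure_mono (Finset.coe_subset.2 (Finset.image_subset_image ?_))
    exact Finset.range_subset_range.2 (by omega)
  · obtain ⟨k, rfl⟩ := he x
    exact ⟨k, subset_closure (Finset.mem_image_of_mem e (by simp))⟩

theorem subsingleton_groupCohomology_succ_of_exact {k G : Type u} [CommRing k] [Group G]
    (A : Rep k G) (n : ℕ)
    (h : ∀ f, inhomogeneousCochains.d A (n + 1) f = 0 → ∃ u, inhomogeneousCochains.d A n u = f) :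
    Subsingleton (groupCohomology A (n + 1)) := by
  refine ModuleCat.subsingleton_of_isZero ?_
  refine (HomologicalComplex.exactAt_iff_isZero_homology _ _).1 ?_
  rw [HomologicalComplex.exactAt_iff' _ n (n + 1) (n + 2) (CochainComplex.prev_nat_succ n)
    (CochainComplex.next ℕ (n + 1)), CategoryTheory.ShortComplex.moduleCat_exact_iff]
  intro f hf
  change (groupCohomology.inhomogeneousCochains A).d (n + 1) (n + 1 + 1) f = 0 at hf
  rw [groupCohomology.inhomogeneousCochains.d_def] at hf
  obtain ⟨u, hu⟩ := h f hf
  refine ⟨u, ?_⟩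
  change (groupCohomology.inhomogeneousCochains A).d n (n + 1) u = f
  rwa [groupCohomology.inhomogeneousCochains.d_def]

theorem inhomogeneousCochains.d_eqOn {k G : Type u} [CommRing k] [Group G] (A : Rep k G)
    {H : Subgroup G} {m : ℕ} {u₁ u₂ : (Fin m → G) → A}
    (h : EqOn u₁ u₂ (univ.pi fun _ => (H : Set G))) :
    EqOn (d A m u₁) (d A m u₂) (univ.pi fun _ => (H : Set G)) := by
  intro g hg
  have hmul : ∀ a ∈ (H : Set G), ∀ b ∈ (H : Set G), a * b ∈ (H : Set G) :=
    fun _ ha _ hb => H.mul_mem ha hb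
  simp only [d_hom_apply]
  rw [h (mem_univ_pi.2 fun i => mem_univ_pi.1 hg i.succ)]
  exact congrArg _ (Finset.sum_congr rfl fun j _ => by rw [h (Fin.contractNth_mem _ hmul j hg)])

namespace indRep

variable {G : Type} [Group G] {A : Type} [AddCommGroup A]

theorem apply_apply (g : G) (f : G →₀ A) (x : G) : indRep G A g f x = f (g⁻¹ * x) := by
  have h := Finsupp.mapDomain_apply (mul_right_injective g) f (g⁻¹ * x)
  rwa [mul_inv_cancel_left] at h

local notation "δ" => inhomogeneousCochains.d (Rep.of (indRep G A))

section Contraction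

variable {H : Subgroup G} [Finite H] {T : Set G} (hT : Subgroup.IsComplement (H : Set G) T)

noncomputable def contraction {m : ℕ} (f : (Fin (m + 1) → G) → G →₀ A) (g : Fin m → G) :
    G →₀ A :=
  Finsupp.ofSupportFinite (fun x => f (Fin.cons ((hT.equiv x).1 : G)⁻¹ g) (hT.equiv x).2) <| by
    refine (finite_iUnion fun h : H => ((f (Fin.cons (h : G)⁻¹ g)).support.finite_toSet.image
      ((h : G) * ·))).subset fun x hx => mem_iUnion.2 ⟨(hT.equiv x).1, (hT.equiv x).2, ?_, ?_⟩
    · exact Finsupp.mem_support_iff.2 hx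
    · exact hT.equiv_fst_mul_equiv_snd x

theorem contraction_apply {m : ℕ} (f : (Fin (m + 1) → G) → G →₀ A) (g : Fin m → G) (x : G) :
    contraction hT f g x = f (Fin.cons ((hT.equiv x).1 : G)⁻¹ g) (hT.equiv x).2 :=
  rfl

theorem d_contraction_add_contraction_d {m : ℕ} (f : (Fin (m + 1) → G) → G →₀ A)
    {g : Fin (m + 1) → G} (hg : g ∈ univ.pi fun _ => (H : Set G)) :
    δ m (contraction hT f) g + contraction hT (δ (m + 1) f) g = f g := by
  rw [mem_univ_pi] at hg
  ext x
  have hshift := hT.equiv_mul_left_of_mem (g := x) (inv_mem (hg 0))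
  have hshift_fst : ((hT.equiv ((g 0)⁻¹ * x)).1 : G) = (g 0)⁻¹ * (hT.equiv x).1 := by
    rw [hshift]; rfl
  have hshift_snd : ((hT.equiv ((g 0)⁻¹ * x)).2 : G) = (hT.equiv x).2 := by
    rw [hshift]
  simp only [Finsupp.add_apply, inhomogeneousCochains.d_hom_apply, Finsupp.coe_finsetSum,
    Finset.sum_apply, Finsupp.smul_apply, apply_apply, contraction_apply, hshift_fst, hshift_snd,
    Subgroup.IsComplement.equiv_fst_mul_equiv_snd, Fin.sum_univ_succ (n := m + 1),
    Fin.contractNth_zero_cons, Fin.contractNth_succ_cons, Fin.cons_zero, Fin.cons_succ,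
    mul_inv_rev, inv_inv]
  simp only [Fin.val_zero, Fin.val_succ, pow_succ, pow_zero, mul_neg_one, neg_neg, neg_smul,
    one_smul, Finset.sum_neg_distrib, Fin.tail_def]
  abel

theorem contraction_eqOn_zero {m : ℕ} {f : (Fin (m + 1) → G) → G →₀ A}
    (hf : EqOn f 0 (univ.pi fun _ => (H : Set G))) :
    EqOn (contraction hT f) 0 (univ.pi fun _ => (H : Set G)) := fun g hg => by
  ext x
  rw [contraction_apply, hf (Fin.cons_mem_univ_pi (inv_mem (hT.equiv x).1.2) hg)]
  rfl

theorem d_contraction_eqOn_of_d_eq_zero {m : ℕ} {f : (Fin (m + 2) → G) → G →₀ A}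
    (hf : δ (m + 2) f = 0) :
    EqOn (δ (m + 1) (contraction hT f)) f (univ.pi fun _ => (H : Set G)) := fun g hg => by
  have h := d_contraction_add_contraction_d hT f hg
  rwa [hf, contraction_eqOn_zero hT (eqOn_refl _ _) hg, Pi.zero_apply, add_zero] at h

end Contraction

theorem exists_d_eqOn_of_d_eq_zero (H : Subgroup G) [Finite H] {m : ℕ}
    {f : (Fin (m + 2) → G) → G →₀ A} (hf : δ (m + 2) f = 0) :
    ∃ u, EqOn (δ (m + 1) u) f (univ.pi fun _ => (H : Set G)) := by
  obtain ⟨T, hT, -⟩ := H.exists_isComplement_right 1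
  exact ⟨_, d_contraction_eqOn_of_d_eq_zero hT hf⟩

theorem exists_d_eqOn_of_le {H H' : Subgroup G} [Finite H] [Finite H'] (hle : H ≤ H') {m : ℕ}
    {f : (Fin (m + 2) → G) → G →₀ A} (hf : δ (m + 2) f = 0) {u : (Fin (m + 1) → G) → G →₀ A}
    (hu : EqOn (δ (m + 1) u) f (univ.pi fun _ => (H : Set G))) :
    ∃ u', EqOn (δ (m + 1) u') f (univ.pi fun _ => (H' : Set G)) ∧
      EqOn u' u (univ.pi fun _ => (H : Set G)) := by
  obtain ⟨T, hT, -⟩ := H.exists_isComplement_right 1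
  obtain ⟨w, hw⟩ := exists_d_eqOn_of_d_eq_zero H' hf
  have hcocycle : EqOn (δ (m + 1) (u - w)) 0 (univ.pi fun _ => (H : Set G)) := fun g hg => by
    rw [map_sub, Pi.sub_apply, hu hg, hw (pi_mono (fun _ _ => hle) hg), sub_self, Pi.zero_apply]
  refine ⟨w + δ m (contraction hT (u - w)), fun g hg => ?_, fun g hg => ?_⟩
  · rw [map_add, ← CategoryTheory.ConcreteCategory.comp_apply,
      groupCohomology.inhomogeneousCochains.d_comp_d]
    exact (add_zero _).trans (hw hg)
  · have h := d_contraction_add_contraction_d hT (u - w) hg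
    rw [contraction_eqOn_zero hT hcocycle hg] at h
    simpa using congrArg (w g + ·) h

end indRep

theorem stmt11_general (G : Type) [Group G] [Countable G]
    (hlf : ∀ S : Finset G, Finite (Subgroup.closure (S : Set G)))
    (A : Type) [AddCommGroup A] (n : ℕ) (hn : 2 ≤ n) :
    Subsingleton (groupCohomology (Rep.of (indRep G A)) n) := by
  obtain ⟨m, rfl⟩ : ∃ m, n = m + 2 := ⟨n - 2, by omega⟩
  obtain ⟨Hs, hmono, hfin, hcover⟩ := Subgroup.exists_monotone_finite_forall_exists_mem hlf
  have hmono' : Monotone fun k => (Hs k : Set G) := fun k l hkl => hmono hkl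
  refine subsingleton_groupCohomology_succ_of_exact _ (m + 1) fun f hf => ?_
  obtain ⟨u, hu⟩ := exists_seq_of_forall_exists_succ
    (fun k u => EqOn (inhomogeneousCochains.d _ (m + 1) u) f (univ.pi fun _ => (Hs k : Set G)))
    (fun k v u => EqOn v u (univ.pi fun _ => (Hs k : Set G)))
    (indRep.exists_d_eqOn_of_d_eq_zero (Hs 0) hf)
    (fun k u hu => indRep.exists_d_eqOn_of_le (hmono k.le_succ) hf hu)
  obtain ⟨v, hv⟩ := exists_eqOn_of_eqOn_succ (fun k l hkl => pi_mono fun _ _ => hmono' hkl)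
    (hmono'.exists_mem_univ_pi hcover) u fun k => (hu k).2
  refine ⟨v, funext fun g => ?_⟩
  obtain ⟨k, hk⟩ := hmono'.exists_mem_univ_pi hcover g
  exact (inhomogeneousCochains.d_eqOn _ (hv k) hk).trans ((hu k).1 hk)

/-- If `G` is a countably infinite locally finite group and `A` is an abelian
group (with trivial `G`-action), then `Hⁿ(G, AG) = 0` for all `n ≥ 2`, where
`AG = ℤG ⊗_ℤ A` is the induced module. -/
theorem stmt11 (G : Type) [Group G] [Countable G] [Infinite G]
    (hlf : ∀ S : Finset G, Finite (Subgroup.closure (S : Set G)))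
    (A : Type) [AddCommGroup A] (n : ℕ) (hn : 2 ≤ n) :
    Subsingleton (groupCohomology (Rep.of (indRep G A)) n) :=
  stmt11_general G hlf A n hn
end

section
/- There exists a partition of the set of limit ordinals below ω₁ into ℵ₁ pairwise disjoint subsets, each of which is stationary in ω₁. -/
open Ordinal

/-- `S` is a closed unbounded subset (club) of the ordinals below `κ`. -/
def IsClubBelow (κ : Ordinal) (S : Set Ordinal) : Prop :=
  (∀ o ∈ S, o < κ) ∧ (∀ a < κ, ∃ b ∈ S, a ≤ b) ∧
    (∀ T ⊆ S, T.Nonempty → sSup T < κ → sSup T ∈ S)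

/-- `S` is stationary below `κ`: it meets every club below `κ`. -/
def IsStationaryBelow (κ : Ordinal) (S : Set Ordinal) : Prop :=
  ∀ C : Set Ordinal, IsClubBelow κ C → (S ∩ C).Nonempty

/-!
Fix, for every countable limit `α`, an injection `f α : α → ℕ` and form the Ulam matrix
`A n β = {α limit | β < α, f α β = n}`. Each column `⋃ n, A n β` is a tail of the limit ordinals,
hence stationary, and since countable intersections of clubs are clubs, some entry `A n β` of the
column is stationary. A pigeonhole argument yields a row `n` containing stationary entries in
`ℵ₁` columns, and the entries of a row are pairwise disjoint because each `f α` is injective.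
Adding the limits left over to one of these sets gives the partition.
-/

open Cardinal Function Set Order

universe u

theorem Set.PairwiseDisjoint.exists_superset_biUnion_eq {α ι : Type*} {B : Set ι}
    {S : ι → Set α} {X : Set α} (hS : B.PairwiseDisjoint S) (hSX : ∀ i ∈ B, S i ⊆ X)
    {i₀ : ι} (hi₀ : i₀ ∈ B) :
    ∃ T : ι → Set α, B.PairwiseDisjoint T ∧ ⋃ i ∈ B, T i = X ∧ ∀ i ∈ B, S i ⊆ T i := by
  classical
  set R := X \ ⋃ i ∈ B, S i
  have hR : ∀ i ∈ B, Disjoint (S i) R := fun i hi =>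
    disjoint_sdiff_right.mono_left (subset_biUnion_of_mem hi)
  set T : ι → Set α := fun i => if i = i₀ then S i ∪ R else S i
  have hST : ∀ i, S i ⊆ T i := fun i => by
    by_cases hi : i = i₀ <;> simp only [T, hi, ↓reduceIte, subset_union_left, subset_rfl]
  refine ⟨T, fun i hi j hj hij => ?_,
    Subset.antisymm (iUnion₂_subset fun i hi => ?_) fun x hx => ?_, fun i _ => hST i⟩
  · by_cases hi' : i = i₀ <;> by_cases hj' : j = i₀ <;>
      simp only [onFun, T, hi', hj', ↓reduceIte]
    · exact absurd (hi'.trans hj'.symm) hij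
    · exact Disjoint.union_left (hi' ▸ hS hi hj hij) (hR j hj).symm
    · exact Disjoint.union_right (hj' ▸ hS hi hj hij) (hR i hi)
    · exact hS hi hj hij
  · by_cases hi' : i = i₀ <;> simp only [T, hi', ↓reduceIte]
    · exact union_subset (hSX i₀ (hi' ▸ hi)) sdiff_subset
    · exact hSX i hi
  · by_cases hxS : x ∈ ⋃ i ∈ B, S i
    · obtain ⟨i, hi, hxi⟩ := mem_iUnion₂.1 hxS
      exact mem_iUnion₂.2 ⟨i, hi, hST i hxi⟩
    · exact mem_iUnion₂.2 ⟨i₀, hi₀, by simp only [T, ↓reduceIte]; exact Or.inr ⟨hx, hxS⟩⟩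

def limitsBelow (o : Ordinal) : Set Ordinal := {x | x < o ∧ IsSuccLimit x}

section ClubFilter

variable {o : Ordinal.{u}}

theorem IsStationaryBelow.mono {S T : Set Ordinal.{u}} (h : IsStationaryBelow o S) (hST : S ⊆ T) :
    IsStationaryBelow o T :=
  fun C hC => (h C hC).mono (inter_subset_inter_left C hST)

theorem isClubBelow_Iio (o : Ordinal.{u}) : IsClubBelow o (Iio o) :=
  ⟨fun _ h => h, fun a ha => ⟨a, ha, le_rfl⟩, fun _ _ _ h => h⟩

theorem IsStationaryBelow.nonempty {S : Set Ordinal.{u}} (h : IsStationaryBelow o S) :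
    S.Nonempty :=
  (h _ (isClubBelow_Iio o)).mono inter_subset_left

theorem IsClubBelow.exists_monotone_seq {C : ℕ → Set Ordinal.{u}} (hC : ∀ k, IsClubBelow o (C k))
    {a : Ordinal.{u}} (ha : a < o) :
    ∃ x : ℕ → Ordinal.{u}, x 0 = a ∧ Monotone x ∧ (∀ k, x k < o) ∧ ∀ k, x (k + 1) ∈ C k := by
  choose! next hnext hle using fun k => (hC k).2.1
  let x : ℕ → Ordinal.{u} := fun k => Nat.rec a (fun k y => next k y) k
  have hxo : ∀ k, x k < o := fun k => by
    induction k with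
    | zero => exact ha
    | succ k ih => exact (hC k).1 _ (hnext k _ ih)
  exact ⟨x, rfl, monotone_nat_of_le_succ fun k => hle k _ (hxo k), hxo,
    fun k => hnext k _ (hxo k)⟩

theorem IsClubBelow.iInter {ι : Type*} [Countable ι] [Nonempty ι] {C : ι → Set Ordinal.{u}}
    (ho : ℵ₀ < o.cof) (hC : ∀ i, IsClubBelow o (C i)) : IsClubBelow o (⋂ i, C i) := by
  refine ⟨fun x hx => (hC (Classical.arbitrary ι)).1 x (mem_iInter.1 hx _), fun a ha => ?_,
    fun T hT hne hlt => mem_iInter.2 fun i =>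
      (hC i).2.2 T (fun x hx => mem_iInter.1 (hT hx) i) hne hlt⟩
  obtain ⟨e, he⟩ := exists_surjective_nat ι
  -- visit every club infinitely often, so the limit of the sequence lies in each of them
  obtain ⟨x, rfl, hmono, hxo, hxC⟩ :=
    IsClubBelow.exists_monotone_seq (fun k => hC (e k.unpair.1)) ha
  have hsup : ⨆ k, x k < o := lift_iSup_lt_of_lt_cof (by simpa using ho) hxo
  refine ⟨⨆ k, x k, mem_iInter.2 fun i => ?_, le_ciSup Ordinal.bddAbove_of_small 0⟩
  obtain ⟨n, rfl⟩ := he i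
  have hsub : ⨆ m, x (Nat.pair n m + 1) = ⨆ k, x k :=
    le_antisymm (ciSup_le fun m => le_ciSup Ordinal.bddAbove_of_small _) (ciSup_le fun k =>
      (hmono ((Nat.right_le_pair n k).trans (Nat.le_succ _))).trans
        (le_ciSup Ordinal.bddAbove_of_small k))
  rw [← hsub]
  refine (hC (e n)).2.2 _ (range_subset_iff.2 fun m => ?_) (range_nonempty _) (hsub.trans_lt hsup)
  simpa using hxC (Nat.pair n m)

theorem IsClubBelow.inter {C D : Set Ordinal.{u}} (ho : ℵ₀ < o.cof) (hC : IsClubBelow o C)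
    (hD : IsClubBelow o D) : IsClubBelow o (C ∩ D) := by
  rw [inter_eq_iInter]
  exact IsClubBelow.iInter ho fun b => by cases b <;> assumption

theorem isSuccLimit_of_aleph0_lt_cof (ho : ℵ₀ < o.cof) : IsSuccLimit o :=
  one_lt_cof_iff.1 (one_lt_aleph0.trans ho)

theorem isClubBelow_limitsBelow (ho : ℵ₀ < o.cof) : IsClubBelow o (limitsBelow o) := by
  refine ⟨fun x hx => hx.1, fun a ha => ⟨a + ω, ⟨?_, isSuccLimit_add a isSuccLimit_omega0⟩,
    le_self_add⟩, fun T hT hne hlt => ⟨hlt, ?_⟩⟩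
  · rw [← iSup_add_natCast]
    exact lift_iSup_lt_of_lt_cof (by simpa using ho) fun n =>
      (isSuccLimit_of_aleph0_lt_cof ho).add_natCast_lt ha n
  · by_contra h
    exact h (hT (csSup_mem_of_not_isSuccLimit hne ⟨o, fun x hx => (hT hx).1.le⟩ h)).2

theorem isStationaryBelow_limitsBelow_inter_Ioi (ho : ℵ₀ < o.cof) {β : Ordinal.{u}}
    (hβ : β < o) : IsStationaryBelow o (limitsBelow o ∩ Ioi β) := by
  intro C hC
  obtain ⟨b, ⟨hbL, hbC⟩, hb⟩ := ((isClubBelow_limitsBelow ho).inter ho hC).2.1 (succ β)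
    ((isSuccLimit_of_aleph0_lt_cof ho).succ_lt hβ)
  exact ⟨b, ⟨hbL, succ_le_iff.1 hb⟩, hbC⟩

theorem IsStationaryBelow.exists_of_iUnion {ι : Type*} [Countable ι] [Nonempty ι]
    {S : ι → Set Ordinal.{u}} (ho : ℵ₀ < o.cof) (h : IsStationaryBelow o (⋃ i, S i)) :
    ∃ i, IsStationaryBelow o (S i) := by
  by_contra! hS
  simp only [IsStationaryBelow, not_forall, not_nonempty_iff_eq_empty] at hS
  choose C hC hSC using hS
  obtain ⟨x, hxS, hxC⟩ := h _ (IsClubBelow.iInter ho hC)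
  obtain ⟨i, hxi⟩ := mem_iUnion.1 hxS
  exact (hSC i).subset ⟨hxi, mem_iInter.1 hxC i⟩

end ClubFilter

section OmegaOne

theorem aleph0_lt_cof_omega_one : ℵ₀ < (ω₁ : Ordinal.{u}).cof := by
  simp

theorem countable_Iio_of_lt_omega_one {α : Ordinal.{u}} (hα : α < ω₁) : (Iio α).Countable := by
  rw [← le_aleph0_iff_set_countable, Cardinal.mk_Iio_ordinal, lift_le_aleph0, ← lt_aleph_one_iff,
    ← lt_omega_iff_card_lt]
  exact hα

theorem mk_Iio_omega_one : #(Iio (ω₁ : Ordinal.{u})) = ℵ₁ := by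
  simp [Cardinal.mk_Iio_ordinal]

def ulamMatrix (f : Ordinal.{u} → Ordinal.{u} → ℕ) (n : ℕ) (β : Ordinal.{u}) : Set Ordinal.{u} :=
  {α ∈ limitsBelow ω₁ | β < α ∧ f α β = n}

theorem iUnion_ulamMatrix (f : Ordinal.{u} → Ordinal.{u} → ℕ) (β : Ordinal.{u}) :
    ⋃ n, ulamMatrix f n β = limitsBelow ω₁ ∩ Ioi β := by
  ext α
  simp +contextual [ulamMatrix]

theorem pairwise_disjoint_ulamMatrix {f : Ordinal.{u} → Ordinal.{u} → ℕ}
    (hf : ∀ α < ω₁, InjOn (f α) (Iio α)) (n : ℕ) : Pairwise (Disjoint on ulamMatrix f n) :=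
  fun _ _ hne => disjoint_left.2 fun _ ⟨hαL, hβα, hβn⟩ ⟨_, hγα, hγn⟩ =>
    hne (hf _ hαL.1 hβα hγα (hβn.trans hγn.symm))

theorem exists_isStationaryBelow_ulamMatrix (f : Ordinal.{u} → Ordinal.{u} → ℕ) {β : Ordinal.{u}}
    (hβ : β < ω₁) : ∃ n, IsStationaryBelow ω₁ (ulamMatrix f n β) := by
  refine IsStationaryBelow.exists_of_iUnion aleph0_lt_cof_omega_one ?_
  rw [iUnion_ulamMatrix]
  exact isStationaryBelow_limitsBelow_inter_Ioi aleph0_lt_cof_omega_one hβ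

theorem exists_pairwiseDisjoint_isStationaryBelow_omega_one :
    ∃ (B : Set Ordinal.{u}) (S : Ordinal.{u} → Set Ordinal.{u}), #B = ℵ₁ ∧ B.PairwiseDisjoint S ∧
      ∀ β ∈ B, S β ⊆ limitsBelow ω₁ ∧ IsStationaryBelow ω₁ (S β) := by
  obtain ⟨f, hf⟩ : ∃ f : Ordinal.{u} → Ordinal.{u} → ℕ, ∀ α < ω₁, InjOn (f α) (Iio α) := by
    choose! f hf using fun α (hα : α < ω₁) =>
      countable_iff_exists_injOn.1 (countable_Iio_of_lt_omega_one hα)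
    exact ⟨f, hf⟩
  choose! N hN using fun β (hβ : β < ω₁) => exists_isStationaryBelow_ulamMatrix f hβ
  obtain ⟨n, hn⟩ : ∃ n, ¬ {β | β < ω₁ ∧ N β = n}.Countable := by
    by_contra! h
    have hω₁ : (Iio (ω₁ : Ordinal.{u})).Countable := by
      refine Countable.mono (fun β hβ => ?_) (countable_iUnion h)
      exact mem_iUnion.2 ⟨N β, hβ, rfl⟩
    rw [← le_aleph0_iff_set_countable, mk_Iio_omega_one] at hω₁
    exact hω₁.not_gt aleph0_lt_aleph_one
  refine ⟨{β | β < ω₁ ∧ N β = n}, ulamMatrix f n,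
    le_antisymm ((mk_le_mk_of_subset fun β hβ => hβ.1).trans_eq mk_Iio_omega_one)
      (aleph_one_le_iff.2 (not_le.1 (mt le_aleph0_iff_set_countable.1 hn))),
    (pairwise_disjoint_ulamMatrix hf n).set_pairwise _,
    fun β hβ => ⟨fun α hα => hα.1, hβ.2 ▸ hN β hβ.1⟩⟩

end OmegaOne

/-- The set of limit ordinals below `ω₁` can be partitioned into `ℵ₁` pairwise
disjoint subsets, each of which is stationary in `ω₁` (Solovay splitting). -/
theorem stmt15 :
    ∃ P : Set (Set Ordinal),
      Cardinal.mk P = Cardinal.aleph 1 ∧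
      (∀ S ∈ P, ∀ T ∈ P, S ≠ T → Disjoint S T) ∧
      ⋃₀ P = {o : Ordinal | o < (Cardinal.aleph 1).ord ∧ Order.IsSuccLimit o} ∧
      ∀ S ∈ P, IsStationaryBelow (Cardinal.aleph 1).ord S := by
  rw [ord_aleph]
  obtain ⟨B, S, hB, hS, hSstat⟩ := exists_pairwiseDisjoint_isStationaryBelow_omega_one
  obtain ⟨β₀, hβ₀⟩ : B.Nonempty := nonempty_coe_sort.1 (mk_ne_zero_iff.1 (hB ▸ aleph_pos 1).ne')
  obtain ⟨T, hT, hTX, hST⟩ := hS.exists_superset_biUnion_eq (fun β hβ => (hSstat β hβ).1) hβ₀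
  have hTstat : ∀ β ∈ B, IsStationaryBelow ω₁ (T β) := fun β hβ =>
    (hSstat β hβ).2.mono (hST β hβ)
  have hTinj : InjOn T B := fun β hβ γ hγ h =>
    hT.elim_set hβ hγ _ (hTstat β hβ).nonempty.some_mem (h ▸ (hTstat β hβ).nonempty.some_mem)
  refine ⟨T '' B, by rw [mk_image_eq_of_injOn T B hTinj, hB], hT.image,
    by rw [sUnion_image, hTX]; rfl, ?_⟩
  rintro _ ⟨β, hβ, rfl⟩
  exact hTstat β hβ
end
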